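/- arXiv:2504.01562 — 3 statements merged into one kernel-verified Lean document; each statement's English description precedes it below -/
import Mathlib

section
/- The integral operator (Af)(t) = ((1-ε)/π) ∫₀^∞ (e^{-r}/(e^{r+t}-1)) f(r) dr satisfies the bound ∫₀^∞ (1-e^{-t})^{1/2} (∫₀^∞ (1-e^{-r})^{-1/2} (e^{r+t}-1)^{-1} dr) g(t)² dt ≤ π ∫₀^∞ g(t)² dt; specifically, for every t > 0, (1-e^{-t})^{1/2} ∫₀^∞ (1-e^{-r})^{-1/2} (e^{r+t}-1)^{-1} dr ≤ π. -/
/-!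
With `b = e^t - 1`, the substitution `u = (1 - e^{-r}) / b` turns the integral into an arctangent
integral: `r ↦ (2/√b) arctan √((1 - e^{-r})/b)` is a primitive of the integrand. It vanishes at
`0` and tends to `(2/√b) arctan √(1/b)` at infinity, and `1 - e^{-t} ≤ t ≤ b`, so the left-hand
side is at most `2 arctan √(1/b) < π`.
-/

open Real MeasureTheory Set Filter Topology

noncomputable def schurKernel (t r : ℝ) : ℝ :=
  (1 - exp (-r)) ^ (-(1:ℝ)/2) / (exp (r + t) - 1)

noncomputable def schurPrimitive (t r : ℝ) : ℝ :=
  2 / √(exp t - 1) * arctan √((1 - exp (-r)) / (exp t - 1))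

lemma one_sub_exp_neg_pos {r : ℝ} (hr : 0 < r) : 0 < 1 - exp (-r) :=
  sub_pos.mpr (exp_lt_one_iff.mpr (neg_lt_zero.mpr hr))

lemma exp_sub_one_pos {t : ℝ} (ht : 0 < t) : 0 < exp t - 1 :=
  sub_pos.mpr (one_lt_exp_iff.mpr ht)

lemma schurKernel_nonneg {t r : ℝ} (ht : 0 < t) (hr : 0 < r) : 0 ≤ schurKernel t r := by
  have := one_sub_exp_neg_pos hr
  have := exp_sub_one_pos (add_pos hr ht)
  unfold schurKernel
  positivity

lemma hasDerivAt_schurPrimitive {t r : ℝ} (ht : 0 < t) (hr : 0 < r) :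
    HasDerivAt (schurPrimitive t) (schurKernel t r) r := by
  set b := exp t - 1
  have hb : 0 < b := exp_sub_one_pos ht
  have hs : 0 < 1 - exp (-r) := one_sub_exp_neg_pos hr
  have hinner : HasDerivAt (fun r => (1 - exp (-r)) / b) (exp (-r) / b) r := by
    simpa using (((hasDerivAt_exp (-r)).comp r (hasDerivAt_neg r)).const_sub 1).div_const b
  refine ((hinner.sqrt (div_pos hs hb).ne').arctan.const_mul (2 / √b)).congr_deriv ?_
  rw [schurKernel, sq_sqrt (div_pos hs hb).le, sqrt_div hs.le, neg_div, rpow_neg hs.le,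
    ← sqrt_eq_rpow, exp_add, exp_neg]
  field_simp
  ring

lemma continuous_schurPrimitive (t : ℝ) : Continuous (schurPrimitive t) := by
  unfold schurPrimitive
  fun_prop

lemma tendsto_schurPrimitive_atTop (t : ℝ) :
    Tendsto (schurPrimitive t) atTop (𝓝 (2 / √(exp t - 1) * arctan √(1 / (exp t - 1)))) := by
  have h : Tendsto (fun r => 1 - exp (-r)) atTop (𝓝 1) := by
    simpa using tendsto_exp_neg_atTop_nhds_zero.const_sub 1
  exact ((continuous_arctan.tendsto _).comp
    ((continuous_sqrt.tendsto _).comp (h.div_const _))).const_mul _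

lemma integral_Ioi_schurKernel {t : ℝ} (ht : 0 < t) :
    ∫ r in Ioi 0, schurKernel t r = 2 / √(exp t - 1) * arctan √(1 / (exp t - 1)) := by
  rw [integral_Ioi_of_hasDerivAt_of_nonneg (continuous_schurPrimitive t).continuousWithinAt
    (fun r hr => hasDerivAt_schurPrimitive ht hr) (fun r hr => schurKernel_nonneg ht hr)
    (tendsto_schurPrimitive_atTop t)]
  simp [schurPrimitive]

/-- The pointwise Schur-test bound: for every t > 0,
(1-e^{-t})^{1/2} ∫₀^∞ (1-e^{-r})^{-1/2}/(e^{r+t}-1) dr ≤ π. -/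
theorem schur_test_pointwise_bound (t : ℝ) (ht : 0 < t) :
    (1 - Real.exp (-t)) ^ ((1:ℝ)/2) *
      ∫ r in Set.Ioi (0:ℝ), (1 - Real.exp (-r)) ^ (-(1:ℝ)/2) / (Real.exp (r + t) - 1)
    ≤ Real.pi := by
  have hb : 0 < exp t - 1 := exp_sub_one_pos ht
  have hle : 1 - exp (-t) ≤ exp t - 1 := by linarith [add_one_le_exp t, add_one_le_exp (-t)]
  have harctan : arctan √(1 / (exp t - 1)) ≤ π / 2 := (arctan_lt_pi_div_two _).le
  rw [← sqrt_eq_rpow]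
  calc √(1 - exp (-t)) * ∫ r in Ioi 0, schurKernel t r
      = √(1 - exp (-t)) * (2 / √(exp t - 1) * arctan √(1 / (exp t - 1))) := by
        rw [integral_Ioi_schurKernel ht]
    _ ≤ √(exp t - 1) * (2 / √(exp t - 1) * (π / 2)) := by gcongr
    _ = π := by field_simp
end

section
/- For every ε ∈ (0,1), the operator A : L²(ℝ₊) → L²(ℝ₊) given by (Af)(t) = ((1-ε)/π) ∫₀^∞ e^{-r}/(e^{r+t}-1) f(r) dr is a well-defined bounded operator with operator norm at most 1-ε, i.e. ‖Af‖ ≤ (1-ε)‖f‖ for all f ∈ L²(ℝ₊). -/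
/-!
Schur test with the weight `h x = (1 - e^{-x})^{-1/2}`. Splitting
`k(t,r) |f r| = (k(t,r) h r)^{1/2} (k(t,r) / h r)^{1/2} |f r|` and applying Cauchy–Schwarz and
Tonelli reduce the `L²` bound to the row and column estimates `∫ k(t,r) h r dr ≤ π h t` and
`∫ k(t,r) h t dt ≤ π h r`. Since `k(t,r) = e^{-2r} e^{-t} / (1 - e^{-r} e^{-t})`, both follow,
with `y = e^{-t}` resp. `y = e^{-r}`, from
`∫₀^∞ e^{-s} ds / ((1 - y e^{-s}) √(1 - e^{-s})) = 2 arctan √(y / (1 - y)) / √(y (1 - y))`,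
which is at most `π / √(y (1 - y))`.
-/

open MeasureTheory Set Function Real Filter Topology
open scoped ENNReal

section SchurTest

variable {α : Type*} [MeasurableSpace α] {μ : Measure α}

theorem ENNReal.sq_lintegral_mul_le {w u : α → ℝ≥0∞}
    (hw : AEMeasurable w μ) (hu : AEMeasurable u μ) :
    (∫⁻ a, w a * u a ∂μ) ^ 2 ≤ (∫⁻ a, w a ∂μ) * ∫⁻ a, w a * u a ^ 2 ∂μ := by
  have hsplit : ∀ a, w a * u a = w a ^ (1 / 2 : ℝ) * (w a ^ (1 / 2 : ℝ) * u a) := fun a => by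
    rw [← mul_assoc, ← ENNReal.rpow_add_of_nonneg _ _ (by norm_num) (by norm_num)]
    norm_num
  have hsq : ∀ x : ℝ≥0∞, (x ^ (1 / 2 : ℝ)) ^ (2 : ℝ) = x := fun x => by
    rw [← ENNReal.rpow_mul]; norm_num
  have hholder := ENNReal.lintegral_mul_le_Lp_mul_Lq μ Real.HolderConjugate.two_two
    (hw.pow_const (1 / 2 : ℝ)) ((hw.pow_const (1 / 2 : ℝ)).mul hu)
  simp only [Pi.mul_apply, ← hsplit, ENNReal.mul_rpow_of_nonneg _ _ zero_le_two, hsq] at hholder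
  calc (∫⁻ a, w a * u a ∂μ) ^ 2
      ≤ ((∫⁻ a, w a ∂μ) ^ (1 / 2 : ℝ) * (∫⁻ a, w a * u a ^ (2 : ℝ) ∂μ) ^ (1 / 2 : ℝ)) ^ 2 := by
        gcongr
    _ = (∫⁻ a, w a ∂μ) * ∫⁻ a, w a * u a ^ 2 ∂μ := by
        rw [mul_pow, ← ENNReal.rpow_two, ← ENNReal.rpow_two, hsq, hsq]
        simp_rw [ENNReal.rpow_two]

theorem sq_eLpNorm_two {E : Type*} [NormedAddCommGroup E] (f : α → E) :
    eLpNorm f 2 μ ^ 2 = ∫⁻ a, ‖f a‖ₑ ^ 2 ∂μ := by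
  simpa using eLpNorm_nnreal_pow_eq_lintegral (f := f) (μ := μ) (p := 2) two_ne_zero

variable {K : α → α → ℝ≥0∞} {h g : α → ℝ≥0∞} {C : ℝ≥0∞}

theorem sq_lintegral_mul_le_of_row_bound {t : α} (hKt : AEMeasurable (K t) μ)
    (hh : AEMeasurable h μ) (hh_pos : ∀ᵐ r ∂μ, h r ≠ 0) (hh_top : ∀ᵐ r ∂μ, h r ≠ ∞)
    (hg : AEMeasurable g μ) (hrow : ∫⁻ r, K t r * h r ∂μ ≤ C * h t) :
    (∫⁻ r, K t r * g r ∂μ) ^ 2 ≤ C * h t * ∫⁻ r, K t r * h r * (g r / h r) ^ 2 ∂μ := by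
  calc (∫⁻ r, K t r * g r ∂μ) ^ 2 = (∫⁻ r, K t r * h r * (g r / h r) ∂μ) ^ 2 := by
        congr 1
        refine lintegral_congr_ae ?_
        filter_upwards [hh_pos, hh_top] with r h0 htop
        rw [mul_assoc, ENNReal.mul_div_cancel h0 htop]
    _ ≤ (∫⁻ r, K t r * h r ∂μ) * ∫⁻ r, K t r * h r * (g r / h r) ^ 2 ∂μ :=
        ENNReal.sq_lintegral_mul_le (hKt.mul hh) (hg.div hh)
    _ ≤ C * h t * ∫⁻ r, K t r * h r * (g r / h r) ^ 2 ∂μ := by gcongr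

theorem lintegral_sq_lintegral_mul_le_of_schur [SFinite μ] (hK : Measurable (uncurry K))
    (hh : Measurable h) (hh_pos : ∀ᵐ r ∂μ, h r ≠ 0) (hh_top : ∀ᵐ r ∂μ, h r ≠ ∞)
    (hrow : ∀ᵐ t ∂μ, ∫⁻ r, K t r * h r ∂μ ≤ C * h t)
    (hcol : ∀ᵐ r ∂μ, ∫⁻ t, K t r * h t ∂μ ≤ C * h r) (hg : AEMeasurable g μ) :
    ∫⁻ t, (∫⁻ r, K t r * g r ∂μ) ^ 2 ∂μ ≤ C ^ 2 * ∫⁻ r, g r ^ 2 ∂μ := by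
  set G := fun r => h r * (g r / h r) ^ 2
  have hG : AEMeasurable G μ := hh.aemeasurable.mul ((hg.div hh.aemeasurable).pow_const 2)
  have hjoint : AEMeasurable (uncurry fun t r => h t * K t r * G r) (μ.prod μ) :=
    ((hh.comp measurable_fst).mul hK).aemeasurable.mul hG.comp_snd
  calc ∫⁻ t, (∫⁻ r, K t r * g r ∂μ) ^ 2 ∂μ
      ≤ ∫⁻ t, C * h t * ∫⁻ r, K t r * h r * (g r / h r) ^ 2 ∂μ ∂μ := by
        refine lintegral_mono_ae ?_
        filter_upwards [hrow] with t ht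
        exact sq_lintegral_mul_le_of_row_bound (by fun_prop) hh.aemeasurable hh_pos hh_top hg ht
    _ = C * ∫⁻ t, ∫⁻ r, h t * K t r * G r ∂μ ∂μ := by
        rw [← lintegral_const_mul'' _ hjoint.lintegral_prod_right]
        refine lintegral_congr fun t => ?_
        rw [mul_assoc, ← lintegral_const_mul'' _ (by fun_prop)]
        simp only [G, mul_assoc]
    _ = C * ∫⁻ r, (∫⁻ t, K t r * h t ∂μ) * G r ∂μ := by
        rw [lintegral_lintegral_swap hjoint]
        refine congrArg _ (lintegral_congr fun r => ?_)
        rw [← lintegral_mul_const'' _ (by fun_prop)]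
        simp only [mul_comm (h _)]
    _ ≤ C * ∫⁻ r, C * h r * G r ∂μ := by
        gcongr C * ?_
        refine lintegral_mono_ae ?_
        filter_upwards [hcol] with r hr
        gcongr
    _ = C ^ 2 * ∫⁻ r, g r ^ 2 ∂μ := by
        rw [← lintegral_const_mul'' _ (by fun_prop), ← lintegral_const_mul'' _ (by fun_prop)]
        refine lintegral_congr_ae ?_
        filter_upwards [hh_pos, hh_top] with r h0 htop
        calc C * (C * h r * G r) = C ^ 2 * (h r * (g r / h r)) ^ 2 := by ring
          _ = C ^ 2 * g r ^ 2 := by rw [ENNReal.mul_div_cancel h0 htop]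

theorem eLpNorm_integral_smul_le_of_schur [SFinite μ] {E : Type*} [NormedAddCommGroup E]
    [NormedSpace ℝ E] {k : α → α → ℝ} (hk : Measurable (uncurry k)) (hh : Measurable h)
    (hh_pos : ∀ᵐ r ∂μ, h r ≠ 0) (hh_top : ∀ᵐ r ∂μ, h r ≠ ∞)
    (hrow : ∀ᵐ t ∂μ, ∫⁻ r, ‖k t r‖ₑ * h r ∂μ ≤ C * h t)
    (hcol : ∀ᵐ r ∂μ, ∫⁻ t, ‖k t r‖ₑ * h t ∂μ ≤ C * h r) {f : α → E}
    (hf : AEStronglyMeasurable f μ) :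
    eLpNorm (fun t => ∫ r, k t r • f r ∂μ) 2 μ ≤ C * eLpNorm f 2 μ := by
  refine (ENNReal.pow_le_pow_left_iff two_ne_zero).1 ?_
  rw [sq_eLpNorm_two, mul_pow, sq_eLpNorm_two]
  calc ∫⁻ t, ‖∫ r, k t r • f r ∂μ‖ₑ ^ 2 ∂μ ≤ ∫⁻ t, (∫⁻ r, ‖k t r‖ₑ * ‖f r‖ₑ ∂μ) ^ 2 ∂μ := by
        gcongr with t
        simpa only [enorm_smul] using enorm_integral_le_lintegral_enorm (fun r => k t r • f r)
    _ ≤ C ^ 2 * ∫⁻ r, ‖f r‖ₑ ^ 2 ∂μ :=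
        lintegral_sq_lintegral_mul_le_of_schur (by fun_prop) hh hh_pos hh_top hrow hcol
          hf.enorm

end SchurTest

namespace ExpKernel

lemma one_sub_exp_neg_pos {s : ℝ} (hs : 0 < s) : 0 < 1 - exp (-s) := by
  simpa using hs

noncomputable def profile (y s : ℝ) : ℝ := exp (-s) / ((1 - y * exp (-s)) * √(1 - exp (-s)))

noncomputable def profilePrimitive (y s : ℝ) : ℝ :=
  2 / √(y * (1 - y)) * arctan (√(y / (1 - y)) * √(1 - exp (-s)))

variable {y : ℝ}

lemma hasDerivAt_profilePrimitive (hy0 : 0 < y) (hy1 : y < 1) {s : ℝ} (hs : 0 < s) :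
    HasDerivAt (profilePrimitive y) (profile y s) s := by
  have hu := one_sub_exp_neg_pos hs
  have hsqrt : HasDerivAt (fun s => √(1 - exp (-s))) (exp (-s) / (2 * √(1 - exp (-s)))) s := by
    simpa using ((hasDerivAt_neg s).exp.const_sub 1).sqrt hu.ne'
  refine ((hsqrt.const_mul _).arctan.const_mul _).congr_deriv ?_
  have h1y : 0 < 1 - y := by linarith
  have hq : 0 < 1 - y * exp (-s) := by nlinarith [exp_pos (-s)]
  rw [sqrt_div hy0.le, sqrt_mul hy0.le, mul_pow, div_pow, sq_sqrt hy0.le, sq_sqrt h1y.le,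
    sq_sqrt hu.le, profile]
  field_simp
  rw [sq_sqrt h1y.le]
  ring

lemma profile_nonneg (hy1 : y < 1) {s : ℝ} (hs : 0 < s) : 0 ≤ profile y s := by
  have hq : 0 ≤ 1 - y * exp (-s) := by
    nlinarith [mul_pos (sub_pos.2 hy1) (exp_pos (-s)), one_sub_exp_neg_pos hs]
  unfold profile
  positivity

lemma lintegral_profile_le (hy0 : 0 < y) (hy1 : y < 1) :
    ∫⁻ s in Ioi 0, ENNReal.ofReal (profile y s) ≤ ENNReal.ofReal (π / √(y * (1 - y))) := by
  have hcont : Continuous (profilePrimitive y) := by unfold profilePrimitive; fun_prop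
  have hlim : Tendsto (profilePrimitive y) atTop
      (𝓝 (2 / √(y * (1 - y)) * arctan (√(y / (1 - y))))) := by
    have : Tendsto (fun s => 1 - exp (-s)) atTop (𝓝 1) := by
      simpa using tendsto_exp_neg_atTop_nhds_zero.const_sub 1
    unfold profilePrimitive
    simpa using ((continuous_arctan.tendsto _).comp (this.sqrt.const_mul _)).const_mul _
  have hderiv := fun s (hs : s ∈ Ioi (0:ℝ)) => hasDerivAt_profilePrimitive hy0 hy1 hs
  have hnonneg := fun s (hs : s ∈ Ioi (0:ℝ)) => profile_nonneg hy1 hs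
  rw [← ofReal_integral_eq_lintegral_ofReal
      (integrableOn_Ioi_deriv_of_nonneg hcont.continuousWithinAt hderiv hnonneg hlim)
      (ae_restrict_of_forall_mem measurableSet_Ioi hnonneg),
    integral_Ioi_of_hasDerivAt_of_nonneg hcont.continuousWithinAt hderiv hnonneg hlim]
  refine ENNReal.ofReal_le_ofReal ?_
  have h0 : profilePrimitive y 0 = 0 := by simp [profilePrimitive]
  rw [h0, sub_zero, div_mul_eq_mul_div, div_le_div_iff_of_pos_right (by positivity)]
  linarith [arctan_lt_pi_div_two (√(y / (1 - y)))]

lemma lintegral_le_of_le_mul_profile (hy0 : 0 < y) (hy1 : y < 1) {c : ℝ} (hc0 : 0 ≤ c)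
    (hc : c ≤ √y) {φ : ℝ → ℝ≥0∞} (hφ : ∀ s > 0, φ s ≤ ENNReal.ofReal (c * profile y s)) :
    ∫⁻ s in Ioi 0, φ s ≤ ENNReal.ofReal π * ENNReal.ofReal (1 / √(1 - y)) := by
  have h1y : 0 < 1 - y := by linarith
  calc ∫⁻ s in Ioi 0, φ s
      ≤ ∫⁻ s in Ioi 0, ENNReal.ofReal c * ENNReal.ofReal (profile y s) := by
        refine lintegral_mono_ae (ae_restrict_of_forall_mem measurableSet_Ioi fun s hs => ?_)
        rw [← ENNReal.ofReal_mul hc0]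
        exact hφ s hs
    _ ≤ ENNReal.ofReal c * ENNReal.ofReal (π / √(y * (1 - y))) := by
        rw [lintegral_const_mul' _ _ ENNReal.ofReal_ne_top]
        gcongr
        exact lintegral_profile_le hy0 hy1
    _ ≤ ENNReal.ofReal π * ENNReal.ofReal (1 / √(1 - y)) := by
        rw [← ENNReal.ofReal_mul hc0, ← ENNReal.ofReal_mul pi_pos.le]
        refine ENNReal.ofReal_le_ofReal ?_
        have := sqrt_pos.2 hy0
        calc c * (π / √(y * (1 - y))) ≤ √y * (π / (√y * √(1 - y))) := by
              rw [sqrt_mul hy0.le]; gcongr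
          _ = π * (1 / √(1 - y)) := by field_simp

noncomputable def kernel (t r : ℝ) : ℝ := exp (-r) / (exp (r + t) - 1)

noncomputable def weight (x : ℝ) : ℝ≥0∞ := ENNReal.ofReal (1 / √(1 - exp (-x)))

lemma kernel_eq (t r : ℝ) :
    kernel t r = exp (-r) * (exp (-r) * exp (-t)) / (1 - exp (-r) * exp (-t)) := by
  have hinv : exp (-r) * exp (-t) = (exp (r + t))⁻¹ := by
    rw [← exp_add, ← exp_neg, neg_add]
  have hE := (exp_pos (r + t)).ne'
  rw [kernel, hinv]
  field_simp

lemma kernel_nonneg {t r : ℝ} (ht : 0 < t) (hr : 0 < r) : 0 ≤ kernel t r := by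
  refine div_nonneg (exp_pos _).le ?_
  simp only [sub_nonneg, one_le_exp_iff]
  linarith

lemma weight_ne_zero {x : ℝ} (hx : 0 < x) : weight x ≠ 0 := by
  have := one_sub_exp_neg_pos hx
  exact (ENNReal.ofReal_pos.2 (by positivity)).ne'

lemma lintegral_kernel_row_le {t : ℝ} (ht : 0 < t) :
    ∫⁻ r in Ioi 0, ‖kernel t r‖ₑ * weight r ≤ ENNReal.ofReal π * weight t := by
  have hy0 : 0 < exp (-t) := exp_pos _
  have hy1 : exp (-t) < 1 := by simpa using ht
  refine lintegral_le_of_le_mul_profile hy0 hy1 hy0.le (le_sqrt_self_iff.2 hy1.le) fun r hr => ?_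
  rw [Real.enorm_eq_ofReal (kernel_nonneg ht hr), weight,
    ← ENNReal.ofReal_mul (kernel_nonneg ht hr)]
  refine ENNReal.ofReal_le_ofReal ?_
  have hfactor : kernel t r * (1 / √(1 - exp (-r)))
      = exp (-r) * (exp (-t) * profile (exp (-t)) r) := by
    rw [kernel_eq, profile]
    simp only [div_eq_mul_inv, mul_inv]
    ring
  rw [hfactor]
  exact mul_le_of_le_one_left (mul_nonneg hy0.le (profile_nonneg hy1 hr))
    (exp_le_one_iff.2 (neg_nonpos.2 hr.le))

lemma lintegral_kernel_col_le {r : ℝ} (hr : 0 < r) :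
    ∫⁻ t in Ioi 0, ‖kernel t r‖ₑ * weight t ≤ ENNReal.ofReal π * weight r := by
  have hy0 : 0 < exp (-r) := exp_pos _
  have hy1 : exp (-r) < 1 := by simpa using hr
  have hc : exp (-r) ^ 2 ≤ √(exp (-r)) :=
    (pow_le_of_le_one hy0.le hy1.le two_ne_zero).trans (le_sqrt_self_iff.2 hy1.le)
  refine lintegral_le_of_le_mul_profile hy0 hy1 (sq_nonneg _) hc fun t ht => ?_
  rw [Real.enorm_eq_ofReal (kernel_nonneg ht hr), weight,
    ← ENNReal.ofReal_mul (kernel_nonneg ht hr)]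
  refine ENNReal.ofReal_le_ofReal (le_of_eq ?_)
  rw [kernel_eq, profile]
  simp only [div_eq_mul_inv, mul_inv]
  ring

end ExpKernel

open ExpKernel in
theorem contraction_A_general (ε : ℝ) (hε1 : ε < 1) (f : ℝ → ℝ)
    (hf : MemLp f 2 (volume.restrict (Ioi 0))) :
    eLpNorm (fun t => ((1 - ε) / Real.pi) *
        ∫ r in Ioi (0:ℝ), Real.exp (-r) / (Real.exp (r + t) - 1) * f r) 2
        (volume.restrict (Ioi 0))
      ≤ ENNReal.ofReal (1 - ε) * eLpNorm f 2 (volume.restrict (Ioi 0)) := by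
  set μ := volume.restrict (Ioi (0:ℝ))
  have hc : 0 ≤ (1 - ε) / π := div_nonneg (by linarith) pi_pos.le
  have hA : eLpNorm (fun t => ∫ r in Ioi 0, kernel t r • f r) 2 μ
      ≤ ENNReal.ofReal π * eLpNorm f 2 μ :=
    eLpNorm_integral_smul_le_of_schur (by unfold kernel; fun_prop) (by fun_prop)
      (ae_restrict_of_forall_mem measurableSet_Ioi fun _ => weight_ne_zero)
      (ae_of_all _ fun _ => ENNReal.ofReal_ne_top)
      (ae_restrict_of_forall_mem measurableSet_Ioi fun _ => lintegral_kernel_row_le)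
      (ae_restrict_of_forall_mem measurableSet_Ioi fun _ => lintegral_kernel_col_le) hf.1
  calc _ ≤ ‖(1 - ε) / π‖ₑ * eLpNorm (fun t => ∫ r in Ioi 0, kernel t r • f r) 2 μ :=
        eLpNorm_const_smul_le
    _ ≤ ENNReal.ofReal ((1 - ε) / π) * (ENNReal.ofReal π * eLpNorm f 2 μ) := by
        rw [Real.enorm_eq_ofReal hc]
        gcongr
    _ = ENNReal.ofReal (1 - ε) * eLpNorm f 2 μ := by
        rw [← mul_assoc, ← ENNReal.ofReal_mul hc, div_mul_cancel₀ _ pi_pos.ne']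

/-- The operator (Af)(t) = ((1-ε)/π) ∫₀^∞ e^{-r}/(e^{r+t}-1) f(r) dr is bounded
on L²(ℝ₊) with norm at most 1-ε. -/
theorem contraction_A (ε : ℝ) (hε0 : 0 < ε) (hε1 : ε < 1) (f : ℝ → ℝ)
    (hf : MemLp f 2 (volume.restrict (Ioi 0))) :
    eLpNorm (fun t => ((1 - ε) / Real.pi) *
        ∫ r in Ioi (0:ℝ), Real.exp (-r) / (Real.exp (r + t) - 1) * f r) 2
        (volume.restrict (Ioi 0))
      ≤ ENNReal.ofReal (1 - ε) * eLpNorm f 2 (volume.restrict (Ioi 0)) :=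
  contraction_A_general ε hε1 f hf
end

section
/- Let A_n be the integral operator (A_n f)(t) = (sin(πd)/π) ∫₀^∞ h(r) e^{-nr}/(e^{r+t}-1) f(r) dr, where h : ℝ₊ → ℝ is continuous with h(0⁺) = 1 and sup_{r≥0} |h(r)e^{-n₀ r}| < 1 + δ where δ = (1/2)|sin(πd)|^{-1} - 1/2. Then for all n ≥ n₀, ‖A_n f‖_{L²} ≤ (1-ε)‖f‖_{L²} with ε = 1/2 - |sin(πd)|/2, for all f ∈ L²(ℝ₊). -/
/-!
Since `e^{r+t} - 1 ≥ r + t` and `e^{-nr} ≤ e^{-n₀r}` for `r ≥ 0`, the kernel of `A_n` is dominated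
by `(1 + δ)/(t + r)`. The integral operator with kernel `1/(t + r)` has norm `π` on `L²(0, ∞)`
(Hilbert's inequality), by the Schur test with the weight `r^{-1/2}`, for which
`∫₀^∞ r^{-1/2}/(t + r) dr = π t^{-1/2}`. Hence `‖A_n‖ ≤ |sin(πd)| (1 + δ) ≤ 1 - ε`.
-/

open MeasureTheory Set Real
open scoped ENNReal

section

variable {α β : Type*} [MeasurableSpace α] [MeasurableSpace β] {μ : Measure α} {ν : Measure β}

theorem ENNReal.sq_lintegral_rpow_half_mul_le {a b : β → ℝ≥0∞} (ha : AEMeasurable a ν)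
    (hb : AEMeasurable b ν) :
    (∫⁻ r, (a r * b r) ^ (2⁻¹ : ℝ) ∂ν) ^ 2 ≤ (∫⁻ r, a r ∂ν) * ∫⁻ r, b r ∂ν := by
  have hsq : ∀ x : ℝ≥0∞, (x ^ (2⁻¹ : ℝ)) ^ (2 : ℝ) = x := fun x => by
    rw [← ENNReal.rpow_mul]; norm_num
  have hCS := ENNReal.lintegral_mul_le_Lp_mul_Lq ν Real.HolderConjugate.two_two
    (ha.pow_const (2⁻¹ : ℝ)) (hb.pow_const (2⁻¹ : ℝ))
  simp only [Pi.mul_apply, hsq] at hCS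
  calc (∫⁻ r, (a r * b r) ^ (2⁻¹ : ℝ) ∂ν) ^ 2
      = (∫⁻ r, a r ^ (2⁻¹ : ℝ) * b r ^ (2⁻¹ : ℝ) ∂ν) ^ 2 := by
        simp only [ENNReal.mul_rpow_of_nonneg _ _ (by norm_num : (0:ℝ) ≤ 2⁻¹)]
    _ ≤ ((∫⁻ r, a r ∂ν) ^ (1 / 2 : ℝ) * (∫⁻ r, b r ∂ν) ^ (1 / 2 : ℝ)) ^ 2 := by gcongr
    _ = (∫⁻ r, a r ∂ν) * ∫⁻ r, b r ∂ν := by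
        rw [mul_pow, ← ENNReal.rpow_natCast, ← ENNReal.rpow_natCast (_ ^ _),
          ← ENNReal.rpow_mul, ← ENNReal.rpow_mul]
        norm_num

theorem ENNReal.sq_lintegral_mul_le_of_weight {k g p : β → ℝ≥0∞} (hk : AEMeasurable k ν)
    (hg : AEMeasurable g ν) (hp : AEMeasurable p ν) (hp0 : ∀ᵐ r ∂ν, p r ≠ 0)
    (hptop : ∀ᵐ r ∂ν, p r ≠ ∞) :
    (∫⁻ r, k r * g r ∂ν) ^ 2 ≤ (∫⁻ r, k r * p r ∂ν) * ∫⁻ r, k r * ((p r)⁻¹ * g r ^ 2) ∂ν := by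
  have hfactor : ∀ᵐ r ∂ν, k r * g r = (k r * p r * (k r * ((p r)⁻¹ * g r ^ 2))) ^ (2⁻¹ : ℝ) := by
    filter_upwards [hp0, hptop] with r hr0 hrtop
    rw [show k r * p r * (k r * ((p r)⁻¹ * g r ^ 2)) = (k r * g r) ^ 2 * (p r * (p r)⁻¹) by ring,
      ENNReal.mul_inv_cancel hr0 hrtop, mul_one]
    exact_mod_cast (ENNReal.pow_rpow_inv_natCast two_ne_zero _).symm
  rw [lintegral_congr_ae hfactor]
  exact ENNReal.sq_lintegral_rpow_half_mul_le (hk.mul hp) (hk.mul (hp.inv.mul (hg.pow_const 2)))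

theorem lintegral_sq_lintegral_mul_le_of_schur_s6 [SFinite μ] [SFinite ν] {K : α → β → ℝ≥0∞}
    (hK : Measurable (Function.uncurry K)) {p : β → ℝ≥0∞} {q : α → ℝ≥0∞} (hp : Measurable p)
    (hq : Measurable q) (hp0 : ∀ᵐ r ∂ν, p r ≠ 0) (hptop : ∀ᵐ r ∂ν, p r ≠ ∞) {C₁ C₂ : ℝ≥0∞}
    (hKp : ∀ᵐ t ∂μ, ∫⁻ r, K t r * p r ∂ν ≤ C₁ * q t)
    (hKq : ∀ᵐ r ∂ν, ∫⁻ t, K t r * q t ∂μ ≤ C₂ * p r) {g : β → ℝ≥0∞} (hg : AEMeasurable g ν) :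
    ∫⁻ t, (∫⁻ r, K t r * g r ∂ν) ^ 2 ∂μ ≤ C₁ * C₂ * ∫⁻ r, g r ^ 2 ∂ν := by
  set w : β → ℝ≥0∞ := fun r => (p r)⁻¹ * g r ^ 2
  have hw : AEMeasurable w ν := hp.aemeasurable.inv.mul (hg.pow_const 2)
  have hKw : AEMeasurable (Function.uncurry fun t r => K t r * q t * w r) (μ.prod ν) :=
    (hK.aemeasurable.mul (hq.comp measurable_fst).aemeasurable).mul hw.comp_snd
  calc ∫⁻ t, (∫⁻ r, K t r * g r ∂ν) ^ 2 ∂μ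
      ≤ ∫⁻ t, C₁ * ∫⁻ r, K t r * q t * w r ∂ν ∂μ := by
        refine lintegral_mono_ae (hKp.mono fun t ht => ?_)
        calc (∫⁻ r, K t r * g r ∂ν) ^ 2
            ≤ (∫⁻ r, K t r * p r ∂ν) * ∫⁻ r, K t r * w r ∂ν :=
              ENNReal.sq_lintegral_mul_le_of_weight hK.of_uncurry_left.aemeasurable hg
                hp.aemeasurable hp0 hptop
          _ ≤ C₁ * q t * ∫⁻ r, K t r * w r ∂ν := by gcongr
          _ = C₁ * ∫⁻ r, K t r * q t * w r ∂ν := by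
              rw [mul_assoc, ← lintegral_const_mul'' _
                (f := fun r => K t r * w r) (hK.of_uncurry_left.aemeasurable.mul hw)]
              exact congrArg _ (lintegral_congr fun r => by ring)
    _ = C₁ * ∫⁻ r, (∫⁻ t, K t r * q t ∂μ) * w r ∂ν := by
        rw [lintegral_const_mul'' _ hKw.lintegral_prod_right, lintegral_lintegral_swap hKw]
        exact congrArg _ (lintegral_congr fun r =>
          lintegral_mul_const'' _ (hK.of_uncurry_right.mul hq).aemeasurable)
    _ ≤ C₁ * ∫⁻ r, C₂ * g r ^ 2 ∂ν := by
        refine mul_le_mul_right (lintegral_mono_ae ?_) _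
        filter_upwards [hKq, hp0, hptop] with r hr hr0 hrtop
        calc (∫⁻ t, K t r * q t ∂μ) * w r ≤ C₂ * p r * w r := by gcongr
          _ = C₂ * g r ^ 2 := by
              rw [mul_assoc, ← mul_assoc (p r), ENNReal.mul_inv_cancel hr0 hrtop, one_mul]
    _ = C₁ * C₂ * ∫⁻ r, g r ^ 2 ∂ν := by rw [lintegral_const_mul'' _ (hg.pow_const 2), mul_assoc]

theorem eLpNorm_two_le_of_lintegral_sq_le {f g : α → ℝ≥0∞} {C : ℝ≥0∞}
    (h : ∫⁻ x, f x ^ 2 ∂μ ≤ C ^ 2 * ∫⁻ x, g x ^ 2 ∂μ) :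
    eLpNorm f 2 μ ≤ C * eLpNorm g 2 μ := by
  have hsq : ∀ u : α → ℝ≥0∞, eLpNorm u 2 μ ^ 2 = ∫⁻ x, u x ^ 2 ∂μ := fun u => by
    simpa using eLpNorm_nnreal_pow_eq_lintegral (f := u) (μ := μ) (p := 2) two_ne_zero
  rwa [← ENNReal.pow_le_pow_left_iff two_ne_zero, mul_pow, hsq, hsq]

end

theorem integral_Ioi_rpow_neg_half_mul_inv_one_add :
    ∫ s in Ioi (0:ℝ), s ^ (-(1/2) : ℝ) * (1 + s)⁻¹ = π := by
  rw [← integral_comp_rpow_Ioi _ two_ne_zero]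
  have hsubst : ∀ x ∈ Ioi (0:ℝ),
      (|(2:ℝ)| * x ^ ((2:ℝ) - 1)) • ((x ^ (2:ℝ)) ^ (-(1/2) : ℝ) * (1 + x ^ (2:ℝ))⁻¹)
        = 2 * (1 + x ^ 2)⁻¹ := by
    intro x (hx : 0 < x)
    rw [← rpow_mul hx.le, rpow_two, smul_eq_mul]
    norm_num [rpow_neg_one]
    field_simp
  rw [setIntegral_congr_fun measurableSet_Ioi hsubst, integral_const_mul,
    integral_Ioi_inv_one_add_sq, arctan_zero]
  ring

theorem integral_Ioi_rpow_neg_half_mul_inv_add {t : ℝ} (ht : 0 < t) :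
    ∫ r in Ioi (0:ℝ), r ^ (-(1/2) : ℝ) * (t + r)⁻¹ = π * t ^ (-(1/2) : ℝ) := by
  have hscale := integral_comp_mul_left_Ioi (fun r : ℝ => r ^ (-(1/2) : ℝ) * (t + r)⁻¹) 0 ht
  have hfactor : ∀ s ∈ Ioi (0:ℝ), (t * s) ^ (-(1/2) : ℝ) * (t + t * s)⁻¹
      = t ^ (-(1/2) : ℝ) * t⁻¹ * (s ^ (-(1/2) : ℝ) * (1 + s)⁻¹) := by
    intro s (hs : 0 < s)
    rw [mul_rpow ht.le hs.le, show t + t * s = t * (1 + s) by ring, mul_inv]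
    ring
  rw [mul_zero, setIntegral_congr_fun measurableSet_Ioi hfactor, integral_const_mul,
    integral_Ioi_rpow_neg_half_mul_inv_one_add, smul_eq_mul] at hscale
  field_simp at hscale ⊢
  linarith

theorem lintegral_Ioi_ofReal_inv_add_mul_ofReal_rpow_neg_half {t : ℝ} (ht : 0 < t) :
    ∫⁻ r in Ioi (0:ℝ), ENNReal.ofReal ((t + r)⁻¹) * ENNReal.ofReal (r ^ (-(1/2) : ℝ))
      = ENNReal.ofReal π * ENNReal.ofReal (t ^ (-(1/2) : ℝ)) := by
  have hval := integral_Ioi_rpow_neg_half_mul_inv_add ht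
  -- integrability comes for free: a non-integrable function has Bochner integral `0`
  have hint : IntegrableOn (fun r : ℝ => r ^ (-(1/2) : ℝ) * (t + r)⁻¹) (Ioi 0) :=
    Integrable.of_integral_ne_zero (by rw [hval]; positivity)
  rw [← ENNReal.ofReal_mul pi_pos.le, ← hval, ofReal_integral_eq_lintegral_ofReal hint]
  · refine setLIntegral_congr_fun measurableSet_Ioi fun r (hr : 0 < r) => ?_
    rw [mul_comm, ENNReal.ofReal_mul (by positivity)]
  · filter_upwards [self_mem_ae_restrict measurableSet_Ioi] with r (hr : 0 < r)
    positivity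

theorem eLpNorm_lintegral_inv_add_le {g : ℝ → ℝ≥0∞}
    (hg : AEMeasurable g (volume.restrict (Ioi 0))) :
    eLpNorm (fun t => ∫⁻ r in Ioi (0:ℝ), ENNReal.ofReal ((t + r)⁻¹) * g r) 2
        (volume.restrict (Ioi 0))
      ≤ ENNReal.ofReal π * eLpNorm g 2 (volume.restrict (Ioi 0)) := by
  have hweight : Measurable fun r : ℝ => ENNReal.ofReal (r ^ (-(1/2) : ℝ)) := by fun_prop
  have hpos : ∀ᵐ r ∂(volume.restrict (Ioi (0:ℝ))), 0 < r :=
    self_mem_ae_restrict measurableSet_Ioi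
  refine eLpNorm_two_le_of_lintegral_sq_le ?_
  rw [sq]
  refine lintegral_sq_lintegral_mul_le_of_schur_s6 (by fun_prop) hweight hweight ?_
    (.of_forall fun _ => ENNReal.ofReal_ne_top) ?_ ?_ hg
  · filter_upwards [hpos] with r hr
    exact (ENNReal.ofReal_pos.mpr (by positivity)).ne'
  · filter_upwards [hpos] with t ht
    exact (lintegral_Ioi_ofReal_inv_add_mul_ofReal_rpow_neg_half ht).le
  · filter_upwards [hpos] with r hr
    simp only [add_comm _ r]
    exact (lintegral_Ioi_ofReal_inv_add_mul_ofReal_rpow_neg_half hr).le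

theorem abs_mul_exp_div_exp_sub_one_le {h : ℝ → ℝ} {a b M : ℝ} (hab : a ≤ b)
    (hM : ∀ r, 0 ≤ r → |h r * exp (-a * r)| ≤ M) {t r : ℝ} (ht : 0 < t) (hr : 0 < r) :
    |h r * exp (-b * r) / (exp (r + t) - 1)| ≤ M * (t + r)⁻¹ := by
  have hnum : |h r * exp (-b * r)| ≤ M :=
    calc |h r * exp (-b * r)| = |h r * exp (-a * r)| * exp (-((b - a) * r)) := by
          rw [abs_mul, abs_mul, abs_of_pos (exp_pos _), abs_of_pos (exp_pos _), mul_assoc,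
            ← exp_add]
          ring_nf
      _ ≤ M * 1 := mul_le_mul (hM r hr.le) (exp_le_one_iff.mpr (by nlinarith)) (exp_pos _).le
          ((abs_nonneg _).trans (hM r hr.le))
      _ = M := mul_one M
  have hden : r + t ≤ exp (r + t) - 1 := by linarith [add_one_le_exp (r + t)]
  rw [abs_div, abs_of_pos (a := exp (r + t) - 1) (by linarith), div_eq_mul_inv, add_comm t r]
  exact mul_le_mul hnum (inv_anti₀ (by positivity) hden) (inv_nonneg.mpr (by linarith))
    ((abs_nonneg _).trans hnum)

theorem eLpNorm_integral_kernel_le_of_abs_le {k : ℝ → ℝ → ℝ} {B : ℝ}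
    (hk : ∀ t r, 0 < t → 0 < r → |k t r| ≤ B * (t + r)⁻¹) {f : ℝ → ℝ}
    (hf : AEMeasurable f (volume.restrict (Ioi 0))) :
    eLpNorm (fun t => ∫ r in Ioi (0:ℝ), k t r * f r) 2 (volume.restrict (Ioi 0))
      ≤ ENNReal.ofReal (π * B) * eLpNorm f 2 (volume.restrict (Ioi 0)) := by
  have hB : 0 ≤ B := by
    have := (abs_nonneg _).trans (hk 1 1 one_pos one_pos)
    exact nonneg_of_mul_nonneg_left this (by norm_num)
  have hpoint : ∀ t, 0 < t → ‖∫ r in Ioi (0:ℝ), k t r * f r‖ₑ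
      ≤ ∫⁻ r in Ioi (0:ℝ), ENNReal.ofReal ((t + r)⁻¹) * ‖B * f r‖ₑ := by
    refine fun t ht => (enorm_integral_le_lintegral_enorm _).trans ?_
    refine setLIntegral_mono' measurableSet_Ioi fun r (hr : 0 < r) => ?_
    rw [← Real.enorm_of_nonneg (by positivity), ← enorm_mul, Real.enorm_eq_ofReal_abs,
      Real.enorm_eq_ofReal_abs]
    refine ENNReal.ofReal_le_ofReal ?_
    rw [abs_mul, abs_mul, abs_mul, abs_of_nonneg hB, abs_of_pos (by positivity : 0 < (t + r)⁻¹)]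
    calc |k t r| * |f r| ≤ B * (t + r)⁻¹ * |f r| := by gcongr; exact hk t r ht hr
      _ = (t + r)⁻¹ * (B * |f r|) := by ring
  calc eLpNorm (fun t => ∫ r in Ioi (0:ℝ), k t r * f r) 2 (volume.restrict (Ioi 0))
      ≤ eLpNorm (fun t => ∫⁻ r in Ioi (0:ℝ), ENNReal.ofReal ((t + r)⁻¹) * ‖B * f r‖ₑ) 2
          (volume.restrict (Ioi 0)) := by
        refine eLpNorm_mono_enorm_ae ?_
        filter_upwards [self_mem_ae_restrict measurableSet_Ioi] with t ht
        exact hpoint t ht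
    _ ≤ ENNReal.ofReal π * eLpNorm (fun r => ‖B * f r‖ₑ) 2 (volume.restrict (Ioi 0)) :=
        eLpNorm_lintegral_inv_add_le (hf.const_mul B).enorm
    _ = ENNReal.ofReal (π * B) * eLpNorm f 2 (volume.restrict (Ioi 0)) := by
        rw [eLpNorm_enorm, ENNReal.ofReal_mul pi_pos.le, mul_assoc, ← Real.enorm_of_nonneg hB]
        exact congrArg _ (eLpNorm_const_smul B f 2 _)

theorem contraction_An_general (d : ℝ)
    (h : ℝ → ℝ)
    (n₀ : ℕ)
    (hbnd : ∀ r : ℝ, 0 ≤ r → |h r * exp (-(n₀ : ℝ) * r)| < 1 + ((1/2) * |sin (π * d)|⁻¹ - 1/2)) :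
    ∀ n : ℕ, n₀ ≤ n → ∀ f : ℝ → ℝ, MemLp f 2 (volume.restrict (Ioi 0)) →
      eLpNorm (fun t => (sin (π * d) / π) *
          ∫ r in Ioi (0:ℝ), h r * exp (-(n : ℝ) * r) / (exp (r + t) - 1) * f r) 2
          (volume.restrict (Ioi 0))
        ≤ ENNReal.ofReal (1 - (1/2 - |sin (π * d)| / 2)) *
            eLpNorm f 2 (volume.restrict (Ioi 0)) := by
  intro n hn f hf
  set s := |sin (π * d)|
  set B := 1 + ((1/2) * s⁻¹ - 1/2)
  have hA := eLpNorm_integral_kernel_le_of_abs_le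
    (k := fun t r => h r * exp (-(n : ℝ) * r) / (exp (r + t) - 1))
    (fun t r ht hr => abs_mul_exp_div_exp_sub_one_le (Nat.cast_le.mpr hn)
      (fun r hr => (hbnd r hr).le) ht hr) hf.aemeasurable
  have hconst : s / π * (π * B) ≤ 1 - (1/2 - s / 2) := by
    have hsB : s / π * (π * B) = s / 2 + s * s⁻¹ / 2 := by
      rw [← mul_assoc, div_mul_cancel₀ _ pi_ne_zero]
      ring
    linarith [mul_inv_le_one (a := s)]
  calc eLpNorm (fun t => (sin (π * d) / π) *
          ∫ r in Ioi (0:ℝ), h r * exp (-(n : ℝ) * r) / (exp (r + t) - 1) * f r) 2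
          (volume.restrict (Ioi 0))
      = ‖sin (π * d) / π‖ₑ * eLpNorm (fun t =>
          ∫ r in Ioi (0:ℝ), h r * exp (-(n : ℝ) * r) / (exp (r + t) - 1) * f r) 2
          (volume.restrict (Ioi 0)) := eLpNorm_const_smul (sin (π * d) / π) _ 2 _
    _ ≤ ENNReal.ofReal (s / π * (π * B)) * eLpNorm f 2 (volume.restrict (Ioi 0)) := by
        rw [Real.enorm_eq_ofReal_abs, abs_div, abs_of_pos pi_pos,
          ENNReal.ofReal_mul (by positivity), mul_assoc]
        exact mul_le_mul_right hA _
    _ ≤ _ := by gcongr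

/-- The operator A_n f(t) = (sin(πd)/π) ∫₀^∞ h(r)e^{-nr}/(e^{r+t}-1) f(r) dr is a
contraction on L²(ℝ₊) with constant 1-ε, ε = 1/2 - |sin(πd)|/2, for all n ≥ n₀. -/
theorem contraction_An (d : ℝ) (hd : d ∈ Set.Ioo (-(1:ℝ)/2) (1/2)) (hd0 : d ≠ 0)
    (h : ℝ → ℝ) (hcont : ContinuousOn h (Ioi 0))
    (hlim : Filter.Tendsto h (nhdsWithin 0 (Ioi 0)) (nhds 1))
    (n₀ : ℕ)
    (hbnd : ∀ r : ℝ, 0 ≤ r → |h r * exp (-(n₀ : ℝ) * r)| < 1 + ((1/2) * |sin (π * d)|⁻¹ - 1/2)) :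
    ∀ n : ℕ, n₀ ≤ n → ∀ f : ℝ → ℝ, MemLp f 2 (volume.restrict (Ioi 0)) →
      eLpNorm (fun t => (sin (π * d) / π) *
          ∫ r in Ioi (0:ℝ), h r * exp (-(n : ℝ) * r) / (exp (r + t) - 1) * f r) 2
          (volume.restrict (Ioi 0))
        ≤ ENNReal.ofReal (1 - (1/2 - |sin (π * d)| / 2)) *
            eLpNorm f 2 (volume.restrict (Ioi 0)) :=
  contraction_An_general d h n₀ hbnd
end
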